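/- Let K be an infinite connected graph with vertex valence bounded by M, and let λ₀ = inf spec(Δ) be the bottom of the spectrum of the combinatorial Laplacian on ℓ²(K). Then there exists a function φ on the vertices of K with φ > 0 everywhere and Δφ = λ₀ φ pointwise (φ need not be square-summable). -/
import Mathlib


/-- The combinatorial Laplacian on real-valued functions. -/
noncomputable def combLap {V : Type*} (G : SimpleGraph V) [G.LocallyFinite]
    (f : V → ℝ) (v : V) : ℝ :=
  ∑ w ∈ G.neighborFinset v, (f v - f w)

/-- The bottom of the ℓ²-spectrum of the combinatorial Laplacian, characterized by
the Rayleigh quotient `λ₀ = inf { (Δf, f)/‖f‖² : f ∈ ℓ²(K), f ≠ 0 }`. -/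
noncomputable def lamZero {V : Type*} (G : SimpleGraph V) [G.LocallyFinite] : ℝ :=
  sInf { r : ℝ | ∃ f : V → ℝ, Memℓp f 2 ∧ f ≠ 0 ∧
    r = (∑' v, combLap G f v * f v) / (∑' v, f v ^ 2) }

set_option linter.unusedSectionVars false

open Topology
section Basics
variable {V : Type*} (G : SimpleGraph V) [G.LocallyFinite]

noncomputable def qf (s : Finset V) (f : V → ℝ) : ℝ := ∑ v ∈ s, combLap G f v * f v

variable {G}

lemma combLap_congr {f g : V → ℝ} (v : V) (h : f v = g v)
    (h' : ∀ w ∈ G.neighborFinset v, f w = g w) : combLap G f v = combLap G g v := by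
  unfold combLap
  exact Finset.sum_congr rfl fun w hw => by rw [h, h' w hw]

lemma combLap_smul (c : ℝ) (f : V → ℝ) (v : V) :
    combLap G (fun w => c * f w) v = c * combLap G f v := by
  unfold combLap
  rw [Finset.mul_sum]
  exact Finset.sum_congr rfl fun w _ => by ring

lemma qf_smul (s : Finset V) (c : ℝ) (f : V → ℝ) :
    qf G s (fun w => c * f w) = c^2 * qf G s f := by
  unfold qf
  rw [Finset.mul_sum]
  exact Finset.sum_congr rfl fun v _ => by rw [combLap_smul]; ring

lemma combLap_add (f g : V → ℝ) (v : V) :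
    combLap G (fun w => f w + g w) v = combLap G f v + combLap G g v := by
  unfold combLap
  rw [← Finset.sum_add_distrib]
  exact Finset.sum_congr rfl fun w _ => by ring

lemma qf_expand (s : Finset V) (f h : V → ℝ) (t : ℝ) :
    qf G s (fun w => f w + t * h w)
      = qf G s f + t * ((∑ v ∈ s, combLap G f v * h v) + ∑ v ∈ s, combLap G h v * f v)
        + t^2 * qf G s h := by
  unfold qf
  have e : ∀ v ∈ s, combLap G (fun w => f w + t * h w) v * (f v + t * h v)
      = combLap G f v * f v + t * (combLap G f v * h v + combLap G h v * f v)
        + t^2 * (combLap G h v * h v) := by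
    intro v _
    rw [combLap_add, combLap_smul]
    ring
  rw [Finset.sum_congr rfl e]
  rw [Finset.sum_add_distrib, Finset.sum_add_distrib, ← Finset.mul_sum, ← Finset.mul_sum,
    Finset.sum_add_distrib]

lemma lin_quad {a b : ℝ} (h : ∀ t : ℝ, 0 ≤ a * t + b * t^2) : a = 0 := by
  by_contra ha
  have h1 := h (-a / (|b| + 1))
  have hb : 0 ≤ |b| := abs_nonneg b
  have hb2 : b ≤ |b| := le_abs_self b
  have ha2 : 0 < a^2 := by positivity
  have hd : (0:ℝ) < |b| + 1 := by linarith
  rw [div_eq_mul_inv] at h1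
  nlinarith [mul_pos ha2 (inv_pos.2 hd), mul_pos (mul_pos ha2 (inv_pos.2 hd)) (inv_pos.2 hd),
    sq_nonneg (a * (|b|+1)⁻¹), mul_inv_cancel₀ (ne_of_gt hd)]

lemma qf_eq_double_sum (s : Finset V) (f : V → ℝ) :
    qf G s f = ∑ v ∈ s, ∑ w ∈ G.neighborFinset v, (f v - f w) * f v := by
  unfold qf combLap
  exact Finset.sum_congr rfl fun v _ => Finset.sum_mul ..

lemma finite_min (s : Finset V) (hs : s.Nonempty) :
    ∃ (lam : ℝ) (u : V → ℝ),
      (∀ v, 0 ≤ u v) ∧ (∀ v ∉ s, u v = 0) ∧ (∑ v ∈ s, u v ^ 2 = 1) ∧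
      (∀ v ∈ s, combLap G u v = lam * u v) ∧
      (∀ g : V → ℝ, (∀ v ∉ s, g v = 0) → lam * ∑ v ∈ s, g v ^ 2 ≤ qf G s g) := by
  classical
  set ext : (↥s → ℝ) → V → ℝ := fun x v => if h : v ∈ s then x ⟨v, h⟩ else 0 with hext
  have hext_apply : ∀ (x : ↥s → ℝ) (i : ↥s), ext x (i : V) = x i := fun x i => dif_pos i.2
  have hsum_sq : ∀ x : ↥s → ℝ, ∑ v ∈ s, (ext x v) ^ 2 = ∑ i : ↥s, (x i) ^ 2 := by
    intro x
    rw [← Finset.sum_attach s (fun v => (ext x v)^2), Finset.univ_eq_attach]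
    exact Finset.sum_congr rfl fun i _ => by rw [hext_apply]
  have hcont_ext : ∀ v, Continuous fun x : ↥s → ℝ => ext x v := by
    intro v
    by_cases h : v ∈ s
    · simp only [hext, dif_pos h]; exact continuous_apply _
    · simp only [hext, dif_neg h]; exact continuous_const
  set Φ : (↥s → ℝ) → ℝ := fun x => qf G s (ext x) with hΦ
  have hΦcont : Continuous Φ := by
    apply continuous_finset_sum
    intro v _
    exact Continuous.mul
      (continuous_finset_sum _ fun w _ => (hcont_ext v).sub (hcont_ext w)) (hcont_ext v)
  set C : Set (↥s → ℝ) := {x | ∑ i : ↥s, (x i)^2 = 1} with hC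
  have hCclosed : IsClosed C :=
    isClosed_eq (continuous_finset_sum _ fun i _ => (continuous_apply i).pow 2) continuous_const
  have hCsub : C ⊆ Set.pi Set.univ fun _ => Set.Icc (-1:ℝ) 1 := by
    intro x hx i _
    have h1 : (x i)^2 ≤ 1 := by
      rw [← hx]
      exact Finset.single_le_sum (f := fun j => (x j)^2) (fun j _ => sq_nonneg _)
        (Finset.mem_univ i)
    constructor <;> nlinarith
  have hCcomp : IsCompact C :=
    IsCompact.of_isClosed_subset (isCompact_univ_pi fun _ => isCompact_Icc) hCclosed hCsub
  have hCne : C.Nonempty := by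
    obtain ⟨v0, hv0⟩ := hs
    refine ⟨Pi.single (⟨v0, hv0⟩ : ↥s) (1:ℝ), ?_⟩
    have : ∀ i : ↥s, ((Pi.single (⟨v0, hv0⟩ : ↥s) (1:ℝ) : ↥s → ℝ) i)^2
        = (if i = ⟨v0, hv0⟩ then (1:ℝ) else 0) := by
      intro i
      rcases eq_or_ne i ⟨v0, hv0⟩ with h | h
      · rw [if_pos h, h, Pi.single_eq_same]; norm_num
      · rw [if_neg h, Pi.single_eq_of_ne h]; norm_num
    simp only [hC, Set.mem_setOf_eq]
    rw [Finset.sum_congr rfl fun i _ => this i, Finset.sum_ite_eq' Finset.univ _ (fun _ => (1:ℝ))]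
    simp
  obtain ⟨x₀, hx₀C, hmin'⟩ := hCcomp.exists_isMinOn hCne hΦcont.continuousOn
  have hmin : ∀ z ∈ C, Φ x₀ ≤ Φ z := fun z hz => hmin' hz
  set lam : ℝ := Φ x₀ with hlam
  -- the scaling property
  have hscale : ∀ g : V → ℝ, (∀ v ∉ s, g v = 0) → lam * ∑ v ∈ s, g v ^ 2 ≤ qf G s g := by
    intro g hg
    set c2 := ∑ v ∈ s, g v ^ 2 with hc2
    have hc2nn : 0 ≤ c2 := Finset.sum_nonneg fun v _ => sq_nonneg _
    rcases eq_or_lt_of_le hc2nn with h0 | hpos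
    · have hg0 : ∀ v, g v = 0 := by
        intro v
        by_cases hv : v ∈ s
        · have := (Finset.sum_eq_zero_iff_of_nonneg fun w _ => sq_nonneg (g w)).1 h0.symm v hv
          exact pow_eq_zero_iff (n := 2) (by norm_num) |>.1 this
        · exact hg v hv
      have : qf G s g = 0 := by
        apply Finset.sum_eq_zero
        intro v _
        rw [hg0 v, mul_zero]
      rw [this, ← h0, mul_zero]
    · set c := Real.sqrt c2 with hcdef
      have hcpos : 0 < c := Real.sqrt_pos.2 hpos
      have hcsq : c^2 = c2 := Real.sq_sqrt (le_of_lt hpos)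
      set x : ↥s → ℝ := fun i => c⁻¹ * g i with hx
      have hextx : ext x = fun v => c⁻¹ * g v := by
        funext v
        by_cases hv : v ∈ s
        · simp only [hext, dif_pos hv, hx]
        · simp only [hext, dif_neg hv, hg v hv, mul_zero]
      have hxC : x ∈ C := by
        simp only [hC, Set.mem_setOf_eq]
        have : ∑ i : ↥s, (x i)^2 = ∑ v ∈ s, (ext x v)^2 := (hsum_sq x).symm
        rw [this, hextx]
        have : ∑ v ∈ s, (c⁻¹ * g v)^2 = c⁻¹^2 * c2 := by
          rw [hc2, Finset.mul_sum]
          exact Finset.sum_congr rfl fun v _ => by ring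
        rw [this, ← hcsq]
        field_simp
      have h1 : lam ≤ Φ x := hmin x hxC
      have h2 : Φ x = c⁻¹^2 * qf G s g := by
        rw [hΦ]; simp only []
        rw [hextx, qf_smul]
      have h3 : c⁻¹^2 * c2 = 1 := by rw [← hcsq]; field_simp
      have h4 : lam * c2 ≤ (c⁻¹^2 * qf G s g) * c2 := by
        apply mul_le_mul_of_nonneg_right _ hc2nn
        rw [← h2]; exact h1
      calc lam * c2 ≤ (c⁻¹^2 * qf G s g) * c2 := h4
        _ = (c⁻¹^2 * c2) * qf G s g := by ring
        _ = qf G s g := by rw [h3, one_mul]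
  -- pass to absolute value
  set y : ↥s → ℝ := fun i => |x₀ i| with hy
  have hyC : y ∈ C := by
    simp only [hC, Set.mem_setOf_eq, hy]
    have hx₀C' : ∑ i : ↥s, (x₀ i)^2 = 1 := by have := hx₀C; rw [hC] at this; exact this
    rw [← hx₀C']
    exact Finset.sum_congr rfl fun i _ => sq_abs _
  have hexty_abs : ∀ v, ext y v = |ext x₀ v| := by
    intro v
    by_cases hv : v ∈ s
    · simp only [hext, dif_pos hv, hy]
    · simp only [hext, dif_neg hv, abs_zero]
  have hΦy_le : Φ y ≤ Φ x₀ := by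
    rw [hΦ]; simp only []
    rw [qf_eq_double_sum, qf_eq_double_sum]
    apply Finset.sum_le_sum
    intro v _
    apply Finset.sum_le_sum
    intro w _
    rw [hexty_abs, hexty_abs]
    set a := ext x₀ v; set b := ext x₀ w
    nlinarith [le_abs_self (b * a), abs_mul b a, sq_abs a, abs_nonneg a, abs_nonneg b]
  have hΦy : Φ y = lam := le_antisymm hΦy_le (hmin y hyC)
  set u : V → ℝ := ext y with hu
  have hqfu : qf G s u = lam := hΦy
  have hupos : ∀ v, 0 ≤ u v := by
    intro v
    rw [hexty_abs v]; exact abs_nonneg _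
  have husupp : ∀ v ∉ s, u v = 0 := by
    intro v hv
    rw [hu]
    simp only [hext]
    rw [dif_neg hv]
  have husum : ∑ v ∈ s, u v ^ 2 = 1 := by
    rw [hu, hsum_sq]
    have := hyC
    rw [hC] at this
    exact this
  refine ⟨lam, u, hupos, husupp, husum, ?_, hscale⟩
  -- Euler–Lagrange
  intro x hxs
  set δ : V → ℝ := fun v => if v = x then (1:ℝ) else 0 with hδ
  have hδsupp : ∀ v ∉ s, δ v = 0 := by
    intro v hv
    have : v ≠ x := fun h => hv (h ▸ hxs)
    simp only [hδ, if_neg this]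
  have crossA : ∑ v ∈ s, combLap G u v * δ v = combLap G u x := by
    have : ∀ v ∈ s, combLap G u v * δ v = if v = x then combLap G u v else 0 := by
      intro v _
      simp only [hδ]
      split <;> simp
    rw [Finset.sum_congr rfl this, Finset.sum_ite_eq' s x (fun v => combLap G u v), if_pos hxs]
  have hcombδ : ∀ v, combLap G δ v
      = (G.neighborFinset v).card * δ v - (if v ∈ G.neighborFinset x then 1 else 0) := by
    intro v
    unfold combLap
    rw [Finset.sum_sub_distrib, Finset.sum_const, nsmul_eq_mul]
    congr 1
    have : ∀ w ∈ G.neighborFinset v, δ w = if w = x then (1:ℝ) else 0 := fun w _ => rfl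
    rw [Finset.sum_congr rfl this, Finset.sum_ite_eq' (G.neighborFinset v) x (fun _ => (1:ℝ))]
    have : x ∈ G.neighborFinset v ↔ v ∈ G.neighborFinset x := by
      rw [SimpleGraph.mem_neighborFinset, SimpleGraph.mem_neighborFinset, G.adj_comm]
    simp [this]
  have crossB : ∑ v ∈ s, combLap G δ v * u v = combLap G u x := by
    rw [Finset.sum_congr rfl fun v _ => by rw [hcombδ v]]
    have expand : ∀ v ∈ s, ((G.neighborFinset v).card * δ v
        - (if v ∈ G.neighborFinset x then 1 else 0)) * u v
          = (if v = x then ((G.neighborFinset v).card : ℝ) * u v else 0)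
            - (if v ∈ G.neighborFinset x then u v else 0) := by
      intro v _
      simp only [hδ]
      split <;> split <;> ring
    rw [Finset.sum_congr rfl expand, Finset.sum_sub_distrib]
    have T1 : ∑ v ∈ s, (if v = x then ((G.neighborFinset v).card : ℝ) * u v else 0)
        = ((G.neighborFinset x).card : ℝ) * u x := by
      rw [Finset.sum_ite_eq' s x (fun v => ((G.neighborFinset v).card : ℝ) * u v), if_pos hxs]
    have T2 : ∑ v ∈ s, (if v ∈ G.neighborFinset x then u v else 0)
        = ∑ w ∈ G.neighborFinset x, u w := by
      rw [Finset.sum_ite_mem]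
      apply Finset.sum_subset (Finset.inter_subset_right)
      intro v hv hv2
      exact husupp v (fun hvs => hv2 (Finset.mem_inter.2 ⟨hvs, hv⟩))
    rw [T1, T2]
    unfold combLap
    rw [Finset.sum_sub_distrib, Finset.sum_const, nsmul_eq_mul]
  have hδsum : ∑ v ∈ s, δ v ^ 2 = 1 := by
    have : ∀ v ∈ s, δ v ^ 2 = if v = x then (1:ℝ) else 0 := by
      intro v _
      simp only [hδ]
      split <;> simp
    rw [Finset.sum_congr rfl this, Finset.sum_ite_eq' s x (fun _ => (1:ℝ)), if_pos hxs]
  have huδ : ∑ v ∈ s, u v * δ v = u x := by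
    have : ∀ v ∈ s, u v * δ v = if v = x then u v else 0 := by
      intro v _
      simp only [hδ]
      split <;> simp
    rw [Finset.sum_congr rfl this, Finset.sum_ite_eq' s x (fun v => u v), if_pos hxs]
  have key : ∀ t : ℝ, 0 ≤ (2 * combLap G u x - 2 * lam * u x) * t + (qf G s δ - lam) * t^2 := by
    intro t
    have hsupp : ∀ v ∉ s, u v + t * δ v = 0 := by
      intro v hv
      rw [husupp v hv, hδsupp v hv, mul_zero, add_zero]
    have h1 := hscale (fun v => u v + t * δ v) hsupp
    have h2 : ∑ v ∈ s, (u v + t * δ v)^2 = 1 + 2 * t * u x + t^2 := by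
      have : ∀ v ∈ s, (u v + t * δ v)^2 = u v^2 + 2*t*(u v * δ v) + t^2 * δ v^2 := by
        intro v _; ring
      rw [Finset.sum_congr rfl this, Finset.sum_add_distrib, Finset.sum_add_distrib,
        ← Finset.mul_sum, ← Finset.mul_sum, husum, huδ, hδsum, mul_one]
    have h3 := qf_expand (G := G) s u δ t
    rw [h2, h3, crossA, crossB, hqfu] at h1
    nlinarith [h1]
  have := lin_quad key
  linarith

end Basics

section Exhaust
variable {V : Type*} {G : SimpleGraph V} [G.LocallyFinite] [DecidableEq V]

variable (G) in
noncomputable def exh (o : V) : ℕ → Finset V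
  | 0 => {o}
  | n+1 => exh o n ∪ (exh o n).biUnion (fun v => G.neighborFinset v)

lemma exh_mono (o : V) : Monotone (exh G o) := by
  apply monotone_nat_of_le_succ
  intro n
  exact Finset.subset_union_left

lemma mem_exh_self (o : V) (n : ℕ) : o ∈ exh G o n := by
  induction n with
  | zero => simp [exh]
  | succ n ih => exact Finset.mem_union_left _ ih

lemma exh_walk (o : V) (n : ℕ) : ∀ v ∈ exh G o n,
    ∃ p : G.Walk v o, ∀ c ∈ p.support, c ∈ exh G o n := by
  induction n with
  | zero =>
    intro v hv
    rw [exh, Finset.mem_singleton] at hv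
    subst hv
    exact ⟨SimpleGraph.Walk.nil, by simp [exh]⟩
  | succ n ih =>
    intro v hv
    rw [exh, Finset.mem_union] at hv
    rcases hv with hv | hv
    · obtain ⟨p, hp⟩ := ih v hv
      exact ⟨p, fun c hc => exh_mono o (Nat.le_succ n) (hp c hc)⟩
    · rw [Finset.mem_biUnion] at hv
      obtain ⟨a, ha, hva⟩ := hv
      obtain ⟨p, hp⟩ := ih a ha
      have hadj : G.Adj v a := (SimpleGraph.mem_neighborFinset ..).1 hva |>.symm
      refine ⟨SimpleGraph.Walk.cons hadj p, ?_⟩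
      intro c hc
      rw [SimpleGraph.Walk.support_cons, List.mem_cons] at hc
      rcases hc with rfl | hc
      · rw [exh]
        exact Finset.mem_union_right _ (Finset.mem_biUnion.2 ⟨a, ha, hva⟩)
      · exact exh_mono o (Nat.le_succ n) (hp c hc)

lemma exh_of_walk (o : V) : ∀ {v : V} (p : G.Walk v o), v ∈ exh G o p.length := by
  intro v p
  induction p with
  | nil => simp [exh]
  | @cons a w o h q ih =>
    rw [SimpleGraph.Walk.length_cons, exh]
    refine Finset.mem_union_right _ (Finset.mem_biUnion.2 ⟨w, ih, ?_⟩)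
    exact (SimpleGraph.mem_neighborFinset ..).2 h.symm

lemma exh_cover (hconn : G.Connected) (o v : V) : ∃ n, v ∈ exh G o n := by
  obtain ⟨p⟩ := hconn.preconnected v o
  exact ⟨p.length, exh_of_walk o p⟩

lemma neighbor_sum_eq {s : Finset V} {lam : ℝ} {u : V → ℝ}
    (heig : ∀ v ∈ s, combLap G u v = lam * u v) {a : V} (ha : a ∈ s) :
    ∑ w ∈ G.neighborFinset a, u w = (G.degree a : ℝ) * u a - lam * u a := by
  have h := heig a ha
  unfold combLap at h
  rw [Finset.sum_sub_distrib, Finset.sum_const, nsmul_eq_mul,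
    SimpleGraph.card_neighborFinset_eq_degree] at h
  linarith

lemma zero_prop (s : Finset V) {lam : ℝ} {u : V → ℝ} (hnn : ∀ v, 0 ≤ u v)
    (heig : ∀ v ∈ s, combLap G u v = lam * u v)
    {a b : V} (p : G.Walk a b) (hp : ∀ c ∈ p.support, c ∈ s) (ha : u a = 0) : u b = 0 := by
  induction p with
  | nil => exact ha
  | @cons a w b h q ih =>
    have has : a ∈ s := hp a (SimpleGraph.Walk.start_mem_support _)
    have hsum := neighbor_sum_eq heig has
    rw [ha] at hsum
    have hzero : ∀ x ∈ G.neighborFinset a, u x = 0 := by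
      have h0 : ∑ x ∈ G.neighborFinset a, u x = 0 := by rw [hsum]; ring
      exact (Finset.sum_eq_zero_iff_of_nonneg fun x _ => hnn x).1 h0
    have hw : u w = 0 := hzero w ((SimpleGraph.mem_neighborFinset ..).2 h)
    apply ih _ hw
    intro c hc
    exact hp c (by rw [SimpleGraph.Walk.support_cons]; exact List.mem_cons_of_mem _ hc)

lemma harnack_step {M : ℕ} (hM : ∀ v, G.degree v ≤ M) {s : Finset V} {lam : ℝ} (hl : 0 ≤ lam)
    {u : V → ℝ} (hnn : ∀ v, 0 ≤ u v) (heig : ∀ v ∈ s, combLap G u v = lam * u v)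
    {a b : V} (hab : G.Adj a b) (ha : a ∈ s) : u b ≤ (M:ℝ) * u a := by
  have hsum := neighbor_sum_eq heig ha
  have hble : u b ≤ ∑ w ∈ G.neighborFinset a, u w :=
    Finset.single_le_sum (fun w _ => hnn w) ((SimpleGraph.mem_neighborFinset ..).2 hab)
  have hdeg : (G.degree a : ℝ) ≤ (M:ℝ) := Nat.cast_le.2 (hM a)
  nlinarith [hnn a, mul_nonneg hl (hnn a)]

lemma harnack_chain {M : ℕ} (hM : ∀ v, G.degree v ≤ M) {s : Finset V} {lam : ℝ} (hl : 0 ≤ lam)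
    {u : V → ℝ} (hnn : ∀ v, 0 ≤ u v) (heig : ∀ v ∈ s, combLap G u v = lam * u v)
    {a b : V} (p : G.Walk a b) (hp : ∀ c ∈ p.support, c ∈ s) :
    u a ≤ (M:ℝ)^p.length * u b ∧ u b ≤ (M:ℝ)^p.length * u a := by
  induction p with
  | nil => simp
  | @cons a w b h q ih =>
    have haS : a ∈ s := hp a (SimpleGraph.Walk.start_mem_support _)
    have hwS : w ∈ s := hp w (by
      rw [SimpleGraph.Walk.support_cons]
      exact List.mem_cons_of_mem _ (SimpleGraph.Walk.start_mem_support _))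
    have hq : ∀ c ∈ q.support, c ∈ s := fun c hc =>
      hp c (by rw [SimpleGraph.Walk.support_cons]; exact List.mem_cons_of_mem _ hc)
    obtain ⟨ih1, ih2⟩ := ih hq
    have s1 : u w ≤ (M:ℝ) * u a := harnack_step hM hl hnn heig h haS
    have s2 : u a ≤ (M:ℝ) * u w := harnack_step hM hl hnn heig h.symm hwS
    have hMnn : (0:ℝ) ≤ (M:ℝ) := Nat.cast_nonneg M
    have hMp : (0:ℝ) ≤ (M:ℝ)^q.length := pow_nonneg hMnn _
    rw [SimpleGraph.Walk.length_cons]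
    constructor
    · calc u a ≤ (M:ℝ) * u w := s2
        _ ≤ (M:ℝ) * ((M:ℝ)^q.length * u b) := by
            exact mul_le_mul_of_nonneg_left ih1 hMnn
        _ = (M:ℝ)^(q.length + 1) * u b := by ring
    · calc u b ≤ (M:ℝ)^q.length * u w := ih2
        _ ≤ (M:ℝ)^q.length * ((M:ℝ) * u a) := by
            exact mul_le_mul_of_nonneg_left s1 hMp
        _ = (M:ℝ)^(q.length + 1) * u a := by ring

end Exhaust

section Analytic
variable {V : Type*} {G : SimpleGraph V} [G.LocallyFinite]

lemma summable_sq_of_memℓp {f : V → ℝ} (hf : Memℓp f 2) : Summable (fun v => f v ^ 2) := by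
  have h2 : (0:ℝ) < (2 : ENNReal).toReal := by norm_num
  have := (memℓp_gen_iff h2).1 hf
  have heq : ∀ v, ‖f v‖ ^ (2 : ENNReal).toReal = f v ^ 2 := by
    intro v
    have : (2 : ENNReal).toReal = ((2:ℕ):ℝ) := by norm_num
    rw [this, Real.rpow_natCast, Real.norm_eq_abs, sq_abs]
  rw [funext heq] at this
  exact this

lemma memℓp_of_finite_supp {f : V → ℝ} (s : Finset V) (hf : ∀ v ∉ s, f v = 0) :
    Memℓp f 2 := by
  apply memℓp_gen
  apply summable_of_ne_finset_zero (s := s)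
  intro v hv
  rw [hf v hv, norm_zero]
  rw [Real.zero_rpow (by norm_num)]

/-- summability of the neighbor-sum of squares -/
lemma summable_nbr_sq (M : ℕ) (hM : ∀ v, G.degree v ≤ M) {f : V → ℝ}
    (hf : Summable (fun v => f v ^ 2)) :
    Summable (fun v => ∑ w ∈ G.neighborFinset v, f w ^ 2) := by
  classical
  apply summable_of_sum_le (c := (M:ℝ) * ∑' v, f v ^ 2)
  · intro v
    exact Finset.sum_nonneg fun w _ => sq_nonneg _
  · intro s
    rw [← Finset.sum_sigma s (fun v => G.neighborFinset v) (fun p => f p.2 ^ 2)]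
    set e : ((_ : V) × V) ↪ ((_ : V) × V) :=
      (Equiv.mk (fun p : (_ : V) × V => (⟨p.2, p.1⟩ : (_ : V) × V))
        (fun p => ⟨p.2, p.1⟩) (fun ⟨a, b⟩ => rfl) (fun ⟨a, b⟩ => rfl)).toEmbedding with he
    have hmap : (s.sigma (fun v => G.neighborFinset v)).map e
        ⊆ (s.biUnion (fun v => G.neighborFinset v)).sigma (fun v => G.neighborFinset v) := by
      intro p hp
      rw [Finset.mem_map] at hp
      obtain ⟨q, hq, rfl⟩ := hp
      rw [Finset.mem_sigma] at hq
      rw [Finset.mem_sigma]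
      refine ⟨Finset.mem_biUnion.2 ⟨q.1, hq.1, hq.2⟩, ?_⟩
      simp only [he, Equiv.coe_toEmbedding, Equiv.coe_fn_mk]
      rw [SimpleGraph.mem_neighborFinset] at hq ⊢
      exact hq.2.symm
    calc ∑ p ∈ s.sigma (fun v => G.neighborFinset v), f p.2 ^ 2
        = ∑ p ∈ (s.sigma (fun v => G.neighborFinset v)).map e, f p.1 ^ 2 := by
          rw [Finset.sum_map]
          rfl
      _ ≤ ∑ p ∈ (s.biUnion (fun v => G.neighborFinset v)).sigma (fun v => G.neighborFinset v),
            f p.1 ^ 2 := Finset.sum_le_sum_of_subset_of_nonneg hmap fun p _ _ => sq_nonneg _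
      _ = ∑ w ∈ s.biUnion (fun v => G.neighborFinset v), (G.degree w : ℝ) * f w ^ 2 := by
          rw [Finset.sum_sigma]
          refine Finset.sum_congr rfl fun w _ => ?_
          have hc : ∀ x ∈ G.neighborFinset w,
              f ((⟨w, x⟩ : (_ : V) × V)).fst ^ 2 = f w ^ 2 := fun _ _ => rfl
          rw [Finset.sum_congr rfl hc, Finset.sum_const, nsmul_eq_mul,
            SimpleGraph.card_neighborFinset_eq_degree]
      _ ≤ ∑ w ∈ s.biUnion (fun v => G.neighborFinset v), (M:ℝ) * f w ^ 2 :=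
          Finset.sum_le_sum fun w _ =>
            mul_le_mul_of_nonneg_right (Nat.cast_le.2 (hM w)) (sq_nonneg _)
      _ = (M:ℝ) * ∑ w ∈ s.biUnion (fun v => G.neighborFinset v), f w ^ 2 := by
          rw [Finset.mul_sum]
      _ ≤ (M:ℝ) * ∑' v, f v ^ 2 := by
          apply mul_le_mul_of_nonneg_left _ (Nat.cast_nonneg M)
          exact Summable.sum_le_tsum _ (fun v _ => sq_nonneg _) hf

/-- pointwise bound on truncated Laplacian terms -/
lemma combLap_term_bound (M : ℕ) (hM : ∀ v, G.degree v ≤ M) {f g : V → ℝ}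
    (hfg : ∀ v, |g v| ≤ |f v|) (v : V) :
    |combLap G g v * g v| ≤ 2 * (M:ℝ) * f v ^ 2 + ∑ w ∈ G.neighborFinset v, f w ^ 2 := by
  have h1 : |combLap G g v * g v| ≤ ∑ w ∈ G.neighborFinset v, |(g v - g w) * g v| := by
    unfold combLap
    rw [Finset.sum_mul]
    exact Finset.abs_sum_le_sum_abs _ _
  have h2 : ∀ w ∈ G.neighborFinset v, |(g v - g w) * g v| ≤ (3/2) * f v^2 + (1/2) * f w^2 := by
    intro w _
    have hv := hfg v
    have hw := hfg w
    have e1 : |(g v - g w) * g v| ≤ (|g v| + |g w|) * |g v| := by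
      rw [abs_mul]
      apply mul_le_mul_of_nonneg_right _ (abs_nonneg _)
      exact (abs_sub _ _)
    nlinarith [sq_abs (g v), sq_abs (g w), sq_abs (f v), sq_abs (f w), abs_nonneg (g v),
      abs_nonneg (g w), abs_nonneg (f v), abs_nonneg (f w), sq_nonneg (|g v| - |g w|),
      sq_nonneg (|f v| - |f w|)]
  have h3 : ∑ w ∈ G.neighborFinset v, ((3/2) * f v^2 + (1/2) * f w^2)
      ≤ 2 * (M:ℝ) * f v ^ 2 + ∑ w ∈ G.neighborFinset v, f w ^ 2 := by
    rw [Finset.sum_add_distrib, Finset.sum_const, nsmul_eq_mul,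
      SimpleGraph.card_neighborFinset_eq_degree]
    have hdeg : (G.degree v : ℝ) ≤ (M:ℝ) := Nat.cast_le.2 (hM v)
    have hs : ∑ w ∈ G.neighborFinset v, (1/2) * f w^2 ≤ ∑ w ∈ G.neighborFinset v, f w^2 := by
      apply Finset.sum_le_sum
      intro w _
      nlinarith [sq_nonneg (f w)]
    nlinarith [sq_nonneg (f v)]
  calc |combLap G g v * g v| ≤ ∑ w ∈ G.neighborFinset v, |(g v - g w) * g v| := h1
    _ ≤ ∑ w ∈ G.neighborFinset v, ((3/2) * f v^2 + (1/2) * f w^2) := Finset.sum_le_sum h2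
    _ ≤ 2 * (M:ℝ) * f v ^ 2 + ∑ w ∈ G.neighborFinset v, f w ^ 2 := h3

end Analytic

/-- Existence of a ground state: on an infinite connected graph of bounded valence,
there is a positive function `φ` (not necessarily square-summable) with
`Δφ = λ₀ φ` pointwise, where `λ₀ = inf spec Δ`. -/
theorem exists_ground_state {V : Type*} [Infinite V] (G : SimpleGraph V)
    [G.LocallyFinite] (hconn : G.Connected) (M : ℕ) (hM : ∀ v, G.degree v ≤ M) :
    ∃ φ : V → ℝ, (∀ v, 0 < φ v) ∧ ∀ v, combLap G φ v = lamZero G * φ v := by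
  classical
  haveI : DecidableEq V := Classical.decEq V
  obtain ⟨o⟩ : Nonempty V := inferInstance
  set S : Set ℝ := { r : ℝ | ∃ f : V → ℝ, Memℓp f 2 ∧ f ≠ 0 ∧
    r = (∑' v, combLap G f v * f v) / (∑' v, f v ^ 2) } with hS
  have hlz : lamZero G = sInf S := rfl
  -- M is positive
  have hMpos : (0:ℝ) < (M:ℝ) := by
    obtain ⟨v, hv⟩ := exists_ne o
    obtain ⟨p⟩ := hconn.preconnected o v
    have hdego : 0 < G.degree o := by
      cases p with
      | nil => exact absurd rfl hv.symm
      | cons h q =>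
        rw [SimpleGraph.degree_pos_iff_exists_adj]
        exact ⟨_, h⟩
    have : 0 < M := lt_of_lt_of_le hdego (hM o)
    exact_mod_cast this
  -- the eigen data on the exhaustion
  have hdata : ∀ n : ℕ, ∃ (lam : ℝ) (u : V → ℝ),
      (∀ v, 0 ≤ u v) ∧ (∀ v ∉ exh G o n, u v = 0) ∧
      (∑ v ∈ exh G o n, u v ^ 2 = 1) ∧
      (∀ v ∈ exh G o n, combLap G u v = lam * u v) ∧
      (∀ g : V → ℝ, (∀ v ∉ exh G o n, g v = 0) →
        lam * ∑ v ∈ exh G o n, g v ^ 2 ≤ qf G (exh G o n) g) :=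
    fun n => finite_min (G := G) (exh G o n) ⟨o, mem_exh_self o n⟩
  choose lam u hupos husupp husum heig hmin using hdata
  -- positivity of u n on exh G o n
  have hpos : ∀ n, ∀ v ∈ exh G o n, 0 < u n v := by
    intro n v hv
    rcases eq_or_lt_of_le (hupos n v) with h0 | h
    · exfalso
      obtain ⟨x, hx, hxne⟩ : ∃ x ∈ exh G o n, u n x ≠ 0 := by
        by_contra hc
        push_neg at hc
        have : ∑ w ∈ exh G o n, u n w ^ 2 = 0 :=
          Finset.sum_eq_zero fun w hw => by rw [hc w hw]; ring
        rw [husum n] at this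
        norm_num at this
      obtain ⟨p, hp⟩ := exh_walk o n v hv
      obtain ⟨q, hq⟩ := exh_walk o n x hx
      have ho : u n o = 0 := zero_prop (exh G o n) (hupos n) (heig n) p hp h0.symm
      have hx0 : u n x = 0 := by
        refine zero_prop (exh G o n) (hupos n) (heig n) q.reverse ?_ ho
        intro c hc
        rw [SimpleGraph.Walk.support_reverse, List.mem_reverse] at hc
        exact hq c hc
      exact hxne hx0
    · exact h
  -- eigenvalue bounds
  have hlam_nonneg : ∀ n, 0 ≤ lam n := by
    intro n
    obtain ⟨x, hx, hxmax⟩ := Finset.exists_max_image (exh G o n) (u n) ⟨o, mem_exh_self o n⟩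
    have hmax : ∀ w, u n w ≤ u n x := by
      intro w
      by_cases hw : w ∈ exh G o n
      · exact hxmax w hw
      · rw [husupp n w hw]; exact (hpos n x hx).le
    have hcl : 0 ≤ combLap G (u n) x := by
      unfold combLap
      exact Finset.sum_nonneg fun w _ => by linarith [hmax w]
    rw [heig n x hx] at hcl
    nlinarith [hpos n x hx]
  have hlam_le : ∀ n, lam n ≤ (M:ℝ) := by
    intro n
    obtain ⟨x, hx, hxmax⟩ := Finset.exists_max_image (exh G o n) (u n) ⟨o, mem_exh_self o n⟩
    have hposx := hpos n x hx
    have hcl : combLap G (u n) x ≤ (M:ℝ) * u n x := by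
      unfold combLap
      calc ∑ w ∈ G.neighborFinset x, (u n x - u n w) ≤ ∑ _w ∈ G.neighborFinset x, u n x :=
            Finset.sum_le_sum fun w _ => by linarith [hupos n w]
        _ = (G.degree x : ℝ) * u n x := by
            rw [Finset.sum_const, nsmul_eq_mul, SimpleGraph.card_neighborFinset_eq_degree]
        _ ≤ (M:ℝ) * u n x := by
            apply mul_le_mul_of_nonneg_right (Nat.cast_le.2 (hM x)) (hupos n x)
    rw [heig n x hx] at hcl
    exact le_of_mul_le_mul_right hcl hposx
  -- normalized functions
  set ψ : ℕ → V → ℝ := fun n v => (u n o)⁻¹ * u n v with hψdef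
  have hψpos : ∀ n v, 0 ≤ ψ n v := fun n v =>
    mul_nonneg (inv_nonneg.2 (hupos n o)) (hupos n v)
  have hψo : ∀ n, ψ n o = 1 := fun n =>
    inv_mul_cancel₀ (ne_of_gt (hpos n o (mem_exh_self o n)))
  have hψeig : ∀ n, ∀ v ∈ exh G o n, combLap G (ψ n) v = lam n * ψ n v := by
    intro n v hv
    rw [hψdef]
    simp only []
    rw [combLap_smul, heig n v hv]
    ring
  -- walks to the base point
  have hwd : ∀ v : V, ∃ (kp : ℕ × G.Walk v o), ∀ c ∈ kp.2.support, c ∈ exh G o kp.1 := by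
    intro v
    obtain ⟨k, hk⟩ := exh_cover hconn o v
    obtain ⟨p, hp⟩ := exh_walk o k v hk
    exact ⟨(k, p), hp⟩
  choose kp hkp using hwd
  have hvmem : ∀ v, ∀ n, (kp v).1 ≤ n → v ∈ exh G o n := by
    intro v n hn
    exact exh_mono o hn (hkp v v (SimpleGraph.Walk.start_mem_support _))
  -- Harnack bounds
  have hbound : ∀ v, ∀ n, (kp v).1 ≤ n →
      ψ n v ∈ Set.Icc (((M:ℝ)^((kp v).2.length))⁻¹) ((M:ℝ)^((kp v).2.length)) := by
    intro v n hn
    have hsupp : ∀ c ∈ (kp v).2.support, c ∈ exh G o n := fun c hc =>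
      exh_mono o hn (hkp v c hc)
    obtain ⟨h1, h2⟩ := harnack_chain hM (hlam_nonneg n) (hψpos n) (hψeig n) (kp v).2 hsupp
    rw [hψo n, mul_one] at h1
    rw [hψo n] at h2
    have hMl : (0:ℝ) < (M:ℝ)^((kp v).2.length) := pow_pos hMpos _
    constructor
    · have h3 : ((M:ℝ)^((kp v).2.length))⁻¹ * 1
          ≤ ((M:ℝ)^((kp v).2.length))⁻¹ * ((M:ℝ)^((kp v).2.length) * ψ n v) :=
        mul_le_mul_of_nonneg_left h2 (inv_nonneg.2 hMl.le)
      rw [mul_one, inv_mul_cancel_left₀ (ne_of_gt hMl)] at h3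
      exact h3
    · exact h1
  -- ultrafilter limits
  set U : Ultrafilter ℕ := Filter.hyperfilter ℕ with hU
  have hUatTop : (U : Filter ℕ) ≤ Filter.atTop := Nat.hyperfilter_le_atTop
  have hlamlim : ∃ L ∈ Set.Icc (0:ℝ) (M:ℝ), Filter.Tendsto lam (U : Filter ℕ) (𝓝 L) := by
    obtain ⟨L, hL1, hL2⟩ := isCompact_Icc.ultrafilter_le_nhds (U.map lam) (by
      rw [Filter.le_principal_iff, Ultrafilter.mem_coe, Ultrafilter.mem_map]
      exact Filter.univ_mem' fun n => ⟨hlam_nonneg n, hlam_le n⟩)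
    refine ⟨L, hL1, ?_⟩
    rwa [Filter.Tendsto, ← Ultrafilter.coe_map]
  obtain ⟨L, hLIcc, hLlim⟩ := hlamlim
  have hφex : ∀ v, ∃ a ∈ Set.Icc (((M:ℝ)^((kp v).2.length))⁻¹) ((M:ℝ)^((kp v).2.length)),
      Filter.Tendsto (fun n => ψ n v) (U : Filter ℕ) (𝓝 a) := by
    intro v
    obtain ⟨a, ha1, ha2⟩ := isCompact_Icc.ultrafilter_le_nhds (U.map (fun n => ψ n v)) (by
      rw [Filter.le_principal_iff, Ultrafilter.mem_coe, Ultrafilter.mem_map]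
      apply Filter.mem_of_superset (hUatTop (Filter.mem_atTop ((kp v).1)))
      intro n hn
      exact hbound v n hn)
    refine ⟨a, ha1, ?_⟩
    rwa [Filter.Tendsto, ← Ultrafilter.coe_map]
  choose φ hφIcc hφlim using hφex
  have hφpos : ∀ v, 0 < φ v := fun v =>
    lt_of_lt_of_le (inv_pos.2 (pow_pos hMpos _)) (hφIcc v).1
  -- the limit eigen equation
  have hφeig : ∀ v, combLap G φ v = L * φ v := by
    intro v
    have T1 : Filter.Tendsto (fun n => combLap G (ψ n) v) (U : Filter ℕ) (𝓝 (combLap G φ v)) := by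
      unfold combLap
      apply tendsto_finset_sum
      intro w _
      exact (hφlim v).sub (hφlim w)
    have T2 : Filter.Tendsto (fun n => lam n * ψ n v) (U : Filter ℕ) (𝓝 (L * φ v)) :=
      hLlim.mul (hφlim v)
    have hEE : (fun n => combLap G (ψ n) v) =ᶠ[(U : Filter ℕ)] (fun n => lam n * ψ n v) := by
      apply Filter.mem_of_superset (hUatTop (Filter.mem_atTop ((kp v).1)))
      intro n hn
      exact hψeig n v (hvmem v n hn)
    exact tendsto_nhds_unique (T1.congr' hEE) T2
  -- membership of lam n in S
  have hmem : ∀ n, lam n ∈ S := by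
    intro n
    refine ⟨u n, memℓp_of_finite_supp (exh G o n) (husupp n), ?_, ?_⟩
    · intro h0
      have : u n o = 0 := by rw [h0]; rfl
      exact absurd this (ne_of_gt (hpos n o (mem_exh_self o n)))
    · have hnum : ∑' v, combLap G (u n) v * u n v = lam n := by
        rw [tsum_eq_sum (s := exh G o n) (fun v hv => by rw [husupp n v hv, mul_zero])]
        have : ∀ v ∈ exh G o n, combLap G (u n) v * u n v = lam n * (u n v ^ 2) := by
          intro v hv
          rw [heig n v hv]
          ring
        rw [Finset.sum_congr rfl this, ← Finset.mul_sum, husum n, mul_one]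
      have hden : ∑' v, u n v ^ 2 = 1 := by
        rw [tsum_eq_sum (s := exh G o n) (fun v hv => by rw [husupp n v hv]; ring)]
        exact husum n
      rw [hnum, hden, div_one]
  -- the lower bound: L is a lower bound of S
  have hLB : ∀ r ∈ S, L ≤ r := by
    rintro r ⟨f, hf2, hfne, rfl⟩
    have hsum2 := summable_sq_of_memℓp hf2
    have hNpos : 0 < ∑' v, f v ^ 2 := by
      obtain ⟨v₀, hv₀⟩ := Function.ne_iff.1 hfne
      have h0 : (0:ℝ) < f v₀ ^ 2 := by
        have := pow_pos (abs_pos.2 hv₀) 2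
        rwa [sq_abs] at this
      exact Summable.tsum_pos hsum2 (fun v => sq_nonneg _) v₀ h0
    set fm : ℕ → V → ℝ := fun m v => if v ∈ exh G o m then f v else 0 with hfm
    have hfm_supp : ∀ m, ∀ v ∉ exh G o m, fm m v = 0 := by
      intro m v hv
      simp only [hfm, if_neg hv]
    have hfm_abs : ∀ m v, |fm m v| ≤ |f v| := by
      intro m v
      simp only [hfm]
      split
      · exact le_refl _
      · rw [abs_zero]; exact abs_nonneg _
    set A : ℕ → ℝ := fun m => ∑' v, combLap G (fm m) v * fm m v with hA
    set B : ℕ → ℝ := fun m => ∑' v, fm m v ^ 2 with hB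
    have hineq : ∀ m, lam m * B m ≤ A m := by
      intro m
      have hAeq : A m = qf G (exh G o m) (fm m) := by
        rw [hA]
        exact tsum_eq_sum (fun v hv => by rw [hfm_supp m v hv, mul_zero])
      have hBeq : B m = ∑ v ∈ exh G o m, fm m v ^ 2 := by
        rw [hB]
        exact tsum_eq_sum (fun v hv => by rw [hfm_supp m v hv]; ring)
      rw [hAeq, hBeq]
      exact hmin m (fm m) (hfm_supp m)
    -- eventual stabilization indices
    have hstab : ∀ v : V, ∃ m₀, ∀ m, m₀ ≤ m →
        (fm m v = f v ∧ ∀ w ∈ G.neighborFinset v, fm m w = f w) := by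
      intro v
      refine ⟨(insert v (G.neighborFinset v)).sup (fun x => (kp x).1), fun m hm => ?_⟩
      have hmem' : ∀ x ∈ insert v (G.neighborFinset v), x ∈ exh G o m := by
        intro x hx
        apply hvmem x m
        exact le_trans (Finset.le_sup (f := fun x => (kp x).1) hx) hm
      constructor
      · rw [hfm]
        simp only [if_pos (hmem' v (Finset.mem_insert_self v _))]
      · intro w hw
        rw [hfm]
        simp only [if_pos (hmem' w (Finset.mem_insert_of_mem hw))]
    have hAlim : Filter.Tendsto A Filter.atTop (𝓝 (∑' v, combLap G f v * f v)) := by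
      rw [hA]
      refine tendsto_tsum_of_dominated_convergence
        (f := fun m v => combLap G (fm m) v * fm m v)
        (g := fun v => combLap G f v * f v)
        (bound := fun v => 2 * (M:ℝ) * f v ^ 2 + ∑ w ∈ G.neighborFinset v, f w ^ 2) ?_ ?_ ?_
      · exact ((hsum2.mul_left (2 * (M:ℝ))).add (summable_nbr_sq M hM hsum2))
      · intro v
        obtain ⟨m₀, hm₀⟩ := hstab v
        show Filter.Tendsto (fun m => combLap G (fm m) v * fm m v) Filter.atTop
          (𝓝 (combLap G f v * f v))
        refine Filter.Tendsto.congr' ?_ tendsto_const_nhds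
        rw [Filter.eventuallyEq_iff_exists_mem]
        refine ⟨Set.Ici m₀, Filter.mem_atTop m₀, fun m hm => ?_⟩
        obtain ⟨h1, h2⟩ := hm₀ m hm
        show combLap G f v * f v = combLap G (fm m) v * fm m v
        rw [combLap_congr v h1.symm (fun w hw => (h2 w hw).symm), h1]
      · apply Filter.Eventually.of_forall
        intro m v
        rw [Real.norm_eq_abs]
        exact combLap_term_bound M hM (hfm_abs m) v
    have hBlim : Filter.Tendsto B Filter.atTop (𝓝 (∑' v, f v ^ 2)) := by
      rw [hB]
      refine tendsto_tsum_of_dominated_convergence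
        (f := fun m v => fm m v ^ 2)
        (g := fun v => f v ^ 2)
        (bound := fun v => f v ^ 2) ?_ ?_ ?_
      · exact hsum2
      · intro v
        obtain ⟨m₀, hm₀⟩ := hstab v
        show Filter.Tendsto (fun m => fm m v ^ 2) Filter.atTop (𝓝 (f v ^ 2))
        refine Filter.Tendsto.congr' ?_ tendsto_const_nhds
        rw [Filter.eventuallyEq_iff_exists_mem]
        refine ⟨Set.Ici m₀, Filter.mem_atTop m₀, fun m hm => ?_⟩
        show f v ^ 2 = fm m v ^ 2
        rw [(hm₀ m hm).1]
      · apply Filter.Eventually.of_forall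
        intro m v
        rw [Real.norm_eq_abs]
        have := hfm_abs m v
        have h1 : |fm m v ^ 2| = |fm m v|^2 := by rw [abs_pow]
        rw [h1]
        calc |fm m v|^2 ≤ |f v|^2 := by nlinarith [abs_nonneg (fm m v), abs_nonneg (f v)]
          _ = f v ^ 2 := sq_abs _
    have hfinal : L * ∑' v, f v ^ 2 ≤ ∑' v, combLap G f v * f v := by
      have hAU := hAlim.mono_left hUatTop
      have hBU := hBlim.mono_left hUatTop
      exact le_of_tendsto_of_tendsto' (hLlim.mul hBU) hAU hineq
    rw [le_div_iff₀ hNpos]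
    exact hfinal
  -- identify lamZero with L
  have hlamZeroL : lamZero G = L := by
    rw [hlz]
    apply le_antisymm
    · apply ge_of_tendsto hLlim
      apply Filter.Eventually.of_forall
      intro n
      exact csInf_le ⟨L, hLB⟩ (hmem n)
    · exact le_csInf ⟨lam 0, hmem 0⟩ hLB
  exact ⟨φ, hφpos, fun v => by rw [hφeig v, hlamZeroL]⟩
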